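/- If X is a proper metric space, then the glued space X_Γ is proper. -/

import Mathlib

open scoped ENNReal
open MeasureTheory Set

noncomputable section

/-- Points of the disjoint union `X ⊔ (S × [0,l])` used to build the glued space `X_Γ`,
where `S` is the circle of circumference `l` (with its quotient / arc metric). -/
abbrev GluePts (X : Type*) (l : ℝ) := X ⊕ (AddCircle l × Set.Icc (0:ℝ) l)

/-- The Euclidean product distance on the cylinder `S × [0,l]`. -/
def cylDist {l : ℝ} (a b : AddCircle l × Set.Icc (0:ℝ) l) : ℝ :=
  Real.sqrt (dist a.1 b.1 ^ 2 + dist a.2 b.2 ^ 2)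

/-- Same, `ℝ≥0∞`-valued. -/
def eCylDist {l : ℝ} (a b : AddCircle l × Set.Icc (0:ℝ) l) : ℝ≥0∞ :=
  ENNReal.ofReal (cylDist a b)

open Classical in
/-- Cost of a single step of a chain in the disjoint union: within one of the two pieces
one pays its distance; jumping between the pieces is free exactly at identified pairs
`γ(p) ∼ (p,0)` and costs `∞` otherwise. -/
def glueStep {X : Type*} [MetricSpace X] {l : ℝ} (γ : AddCircle l → X) :
    GluePts X l → GluePts X l → ℝ≥0∞
  | Sum.inl x, Sum.inl y => edist x y
  | Sum.inr a, Sum.inr b => eCylDist a b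
  | Sum.inl x, Sum.inr b => if x = γ b.1 ∧ (b.2 : ℝ) = 0 then 0 else ∞
  | Sum.inr a, Sum.inl y => if y = γ a.1 ∧ (a.2 : ℝ) = 0 then 0 else ∞

/-- Total cost of a chain (a list of points of the disjoint union). -/
def chainCost {X : Type*} [MetricSpace X] {l : ℝ} (γ : AddCircle l → X) :
    List (GluePts X l) → ℝ≥0∞
  | [] => 0
  | [_] => 0
  | a :: b :: t => glueStep γ a b + chainCost γ (b :: t)

/-- The quotient (pseudo-)distance of the metric gluing `X_Γ = (X ⊔ S×[0,l]) / (γ(p) ∼ (p,0))`: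
the infimum of total costs of finite chains joining the two points. -/
def quotDist {X : Type*} [MetricSpace X] {l : ℝ} (γ : AddCircle l → X)
    (x y : GluePts X l) : ℝ≥0∞ :=
  ⨅ (c : List (GluePts X l)) (_ : c.head? = some x ∧ c.getLast? = some y), chainCost γ c

/-- `γ : S → X` (with `S` the circle of circumference `l`) is a unit speed curve:
the length of the restriction of (the periodic lift of) `γ` to any interval `[a,b]`
equals `b - a`. This expresses that `γ` is the constant speed parametrization of a
closed rectifiable curve of length `l`. -/
def IsUnitSpeed {X : Type*} [MetricSpace X] {l : ℝ} (γ : AddCircle l → X) : Prop :=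
  ∀ a b : ℝ, a ≤ b → eVariationOn (fun t : ℝ => γ t) (Set.Icc a b) = ENNReal.ofReal (b - a)

/-- The canonical retraction `P_Γ : X_Γ → X`: identity on `X` and `(p,t) ↦ γ(p)` on the collar. -/
def glueProj {X : Type*} [MetricSpace X] {l : ℝ} (γ : AddCircle l → X) :
    GluePts X l → X
  | Sum.inl x => x
  | Sum.inr a => γ a.1

end

/-!
The canonical retraction `glueProj : X_Γ → X` is 1-Lipschitz for the quotient distance, because
`γ` is 1-Lipschitz and every chain projects to a chain in `X` of no larger cost. Hence a bounded
sequence has bounded image in `X`. Passing to a subsequence, it lies either entirely in `X`,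
where properness yields a convergent subsequence, or entirely in the compact cylinder
`S × [0,l]`; in both cases the quotient distance is dominated by the distance in that piece.
-/

open Filter Topology

theorem Sum.exists_strictMono_subseq_inl_or_inr {α β : Type*} (u : ℕ → α ⊕ β) :
    (∃ φ : ℕ → ℕ, StrictMono φ ∧ ∃ w : ℕ → α, ∀ n, u (φ n) = Sum.inl (w n)) ∨
      ∃ φ : ℕ → ℕ, StrictMono φ ∧ ∃ v : ℕ → β, ∀ n, u (φ n) = Sum.inr (v n) := by
  have hfreq : (∃ᶠ n in atTop, ∃ x, u n = Sum.inl x) ∨ ∃ᶠ n in atTop, ∃ y, u n = Sum.inr y := by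
    rw [← frequently_or_distrib]
    exact Frequently.of_forall fun n => by cases u n <;> simp
  refine hfreq.imp (fun h => ?_) (fun h => ?_) <;>
  · obtain ⟨φ, hφ, hu⟩ := extraction_of_frequently_atTop h
    choose w hw using hu
    exact ⟨φ, hφ, w, hw⟩

theorem continuous_cylDist_left {l : ℝ} (b : AddCircle l × Set.Icc (0 : ℝ) l) :
    Continuous fun a => cylDist a b := by
  unfold cylDist
  fun_prop

section Glue

variable {X : Type*} [MetricSpace X] {l : ℝ} (γ : AddCircle l → X)

theorem edist_glueProj_le_glueStep (hγ : LipschitzWith 1 γ) (a b : GluePts X l) :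
    edist (glueProj γ a) (glueProj γ b) ≤ glueStep γ a b := by
  rcases a with x | a <;> rcases b with y | b <;> simp only [glueProj, glueStep]
  · exact le_rfl
  · split_ifs with h
    · simp [h.1]
    · exact le_top
  · split_ifs with h
    · simp [h.1]
    · exact le_top
  · calc edist (γ a.1) (γ b.1) ≤ edist a.1 b.1 := by simpa using hγ.edist_le_mul a.1 b.1
      _ = ENNReal.ofReal (dist a.1 b.1) := edist_dist _ _
      _ ≤ eCylDist a b :=
        ENNReal.ofReal_le_ofReal <| Real.le_sqrt_of_sq_le (le_add_of_nonneg_right (sq_nonneg _))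

theorem edist_glueProj_le_chainCost (hγ : LipschitzWith 1 γ) :
    ∀ (c : List (GluePts X l)) {x y : GluePts X l}, c.head? = some x → c.getLast? = some y →
      edist (glueProj γ x) (glueProj γ y) ≤ chainCost γ c
  | [], _, _, hx, _ => by simp at hx
  | [a], _, _, hx, hy => by
      obtain rfl : a = _ := by simpa using hx
      obtain rfl : a = _ := by simpa using hy
      simp
  | a :: b :: t, _, y, hx, hy => by
      obtain rfl : a = _ := by simpa using hx
      rw [List.getLast?_cons_cons] at hy
      calc edist (glueProj γ a) (glueProj γ y)
          ≤ edist (glueProj γ a) (glueProj γ b) + edist (glueProj γ b) (glueProj γ y) :=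
            edist_triangle _ _ _
        _ ≤ glueStep γ a b + chainCost γ (b :: t) :=
            add_le_add (edist_glueProj_le_glueStep γ hγ a b)
              (edist_glueProj_le_chainCost hγ (b :: t) rfl hy)

theorem edist_glueProj_le_quotDist (hγ : LipschitzWith 1 γ) (x y : GluePts X l) :
    edist (glueProj γ x) (glueProj γ y) ≤ quotDist γ x y :=
  le_iInf₂ fun c hc => edist_glueProj_le_chainCost γ hγ c hc.1 hc.2

theorem quotDist_le_glueStep (x y : GluePts X l) : quotDist γ x y ≤ glueStep γ x y :=
  calc quotDist γ x y ≤ chainCost γ [x, y] := iInf₂_le [x, y] ⟨rfl, rfl⟩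
    _ = glueStep γ x y := add_zero _

theorem tendsto_quotDist_of_tendsto_glueStep {ι : Type*} {f : Filter ι} {u : ι → GluePts X l}
    {x : GluePts X l} (h : Tendsto (fun i => glueStep γ (u i) x) f (𝓝 0)) :
    Tendsto (fun i => quotDist γ (u i) x) f (𝓝 0) :=
  tendsto_of_tendsto_of_tendsto_of_le_of_le tendsto_const_nhds h (fun _ => zero_le)
    (fun i => quotDist_le_glueStep γ (u i) x)

theorem tendsto_quotDist_inl {ι : Type*} {f : Filter ι} {w : ι → X} {x : X}
    (h : Tendsto w f (𝓝 x)) :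
    Tendsto (fun i => quotDist γ (Sum.inl (w i)) (Sum.inl x)) f (𝓝 0) :=
  tendsto_quotDist_of_tendsto_glueStep γ (tendsto_iff_edist_tendsto_0.mp h)

theorem tendsto_quotDist_inr {ι : Type*} {f : Filter ι} {v : ι → AddCircle l × Set.Icc (0 : ℝ) l}
    {a : AddCircle l × Set.Icc (0 : ℝ) l} (h : Tendsto v f (𝓝 a)) :
    Tendsto (fun i => quotDist γ (Sum.inr (v i)) (Sum.inr a)) f (𝓝 0) := by
  have hcyl : Tendsto (fun i => cylDist (v i) a) f (𝓝 0) := by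
    simpa [cylDist, Function.comp_def] using ((continuous_cylDist_left a).tendsto a).comp h
  exact tendsto_quotDist_of_tendsto_glueStep γ (by simpa [glueStep, eCylDist] using ENNReal.tendsto_ofReal hcyl)

theorem exists_subseq_tendsto_quotDist_inl [ProperSpace X] (hγ : LipschitzWith 1 γ)
    (w : ℕ → X) (x₀ : GluePts X l) (R : NNReal) (hw : ∀ n, quotDist γ (Sum.inl (w n)) x₀ ≤ R) :
    ∃ (x : X) (φ : ℕ → ℕ), StrictMono φ ∧
      Tendsto (fun n => quotDist γ (Sum.inl (w (φ n))) (Sum.inl x)) atTop (𝓝 0) := by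
  have hball : ∀ n, w n ∈ Metric.closedBall (glueProj γ x₀) R := fun n => by
    rw [← Metric.closedEBall_coe]
    exact (edist_glueProj_le_quotDist γ hγ _ _).trans (hw n)
  obtain ⟨x, -, φ, hφ, hlim⟩ := tendsto_subseq_of_bounded Metric.isBounded_closedBall hball
  exact ⟨x, φ, hφ, tendsto_quotDist_inl γ hlim⟩

theorem exists_subseq_tendsto_quotDist_inr [Fact (0 < l)]
    (v : ℕ → AddCircle l × Set.Icc (0 : ℝ) l) :
    ∃ (a : AddCircle l × Set.Icc (0 : ℝ) l) (φ : ℕ → ℕ), StrictMono φ ∧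
      Tendsto (fun n => quotDist γ (Sum.inr (v (φ n))) (Sum.inr a)) atTop (𝓝 0) := by
  obtain ⟨a, -, φ, hφ, hlim⟩ := isCompact_univ.tendsto_subseq fun n => Set.mem_univ (v n)
  exact ⟨a, φ, hφ, tendsto_quotDist_inr γ hlim⟩

end Glue

/-- Properness is stated sequentially, which for metric spaces is equivalent to closed bounded
sets being compact. -/
theorem glued_space_proper_general
    (X : Type*) [MetricSpace X] [ProperSpace X] (l : ℝ) (hl : 0 < l)
    (γ : AddCircle l → X) (hγLip : LipschitzWith 1 γ) :
    ∀ (u : ℕ → GluePts X l) (x₀ : GluePts X l) (R : ℝ≥0∞), R ≠ ∞ →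
      (∀ n, quotDist γ (u n) x₀ ≤ R) →
      ∃ (x : GluePts X l) (φ : ℕ → ℕ), StrictMono φ ∧
        Filter.Tendsto (fun n => quotDist γ (u (φ n)) x) Filter.atTop (nhds 0) := by
  intro u x₀ R hR hbound
  have : Fact (0 < l) := ⟨hl⟩
  lift R to NNReal using hR
  rcases Sum.exists_strictMono_subseq_inl_or_inr u with ⟨φ, hφ, w, hw⟩ | ⟨φ, hφ, v, hv⟩
  · obtain ⟨x, ψ, hψ, hlim⟩ :=
      exists_subseq_tendsto_quotDist_inl γ hγLip w x₀ R fun n => hw n ▸ hbound (φ n)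
    exact ⟨Sum.inl x, φ ∘ ψ, hφ.comp hψ, by simpa only [Function.comp_apply, hw] using hlim⟩
  · obtain ⟨a, ψ, hψ, hlim⟩ := exists_subseq_tendsto_quotDist_inr γ v
    exact ⟨Sum.inr a, φ ∘ ψ, hφ.comp hψ, by simpa only [Function.comp_apply, hv] using hlim⟩

/-- If `X` is a proper metric space, then the glued space `X_Γ` is
proper: every sequence which is bounded with respect to the quotient distance has a
subsequence converging (in the quotient distance) to some point. (For metric spaces
this is equivalent to closed bounded sets being compact.) -/
theorem glued_space_proper
    (X : Type*) [MetricSpace X] [ProperSpace X] (l : ℝ) (hl : 0 < l)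
    (γ : AddCircle l → X) (hγLip : LipschitzWith 1 γ) (hγspeed : IsUnitSpeed γ) :
    ∀ (u : ℕ → GluePts X l) (x₀ : GluePts X l) (R : ℝ≥0∞), R ≠ ∞ →
      (∀ n, quotDist γ (u n) x₀ ≤ R) →
      ∃ (x : GluePts X l) (φ : ℕ → ℕ), StrictMono φ ∧
        Filter.Tendsto (fun n => quotDist γ (u (φ n)) x) Filter.atTop (nhds 0) :=
  glued_space_proper_general X l hl γ hγLip
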